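/- Let D⊆F₄⁺ be a non-singular orthogonal rook placement having a unique maximal element β₀ with respect to ≤. Let β∈D∖{β₀} be such that γ≯β for all γ∈D∖{β₀}. Assume that β₀−β has a unique expression as a sum of positive roots, say β₀−β=γ₁+⋯+γ_k with γ₁,…,γ_k∈F₄⁺ (uniqueness as a multiset of positive roots), and that β+Σ_{j∈J}γⱼ ∈ F₄⁺ for every subset J⊆{1,…,k}. If ξ₁, ξ₂ : D→ℂ∖{0} satisfy ξ₁(β)≠ξ₂(β), then Ω_{D,ξ₁} ≠ Ω_{D,ξ₂}. -/

import Mathlib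

/-!
If the two orbits agree, then `f₂ = f₁ ∘ exp(−ad x)` for some `x`. Let `W` be spanned by the
`e_w` with `w` below no element of `D`: `f₁` vanishes on `W`, `ad x` preserves `W`, and
`[x, e_{β₀}] ∈ W` because `β₀` is maximal. For each `γⱼ`, the root `v = β + Σ_{i ≠ j} γᵢ` lies
outside `D` (non-singularity forces `k ≥ 2`), and by uniqueness of the expression of `β₀ − β`
the only root `η` with `η + v` below an element of `D` is `γⱼ`, where `γⱼ + v = β₀`. Evaluating
`f₂ = f₁ ∘ exp(−ad x)` at `e_v` only sees the terms of order `≤ 1`, giving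
`x_{γⱼ} N_{γⱼ,v} ξ₁(β₀) = 0`, so `x` has no component along any `γⱼ`. Uniqueness again puts
`[x, e_β]` in `W`, whence `ξ₂(β) = f₂(e_β) = f₁(e_β) = ξ₁(β)`.
-/

open scoped RealInnerProductSpace

/-- The standard basis vectors `ε₁, ε₂, ε₃, ε₄` of `ℝ⁴` (indexed by `Fin 4`). -/
noncomputable def eps (i : Fin 4) : EuclideanSpace ℝ (Fin 4) := EuclideanSpace.single i 1

/-- The set of positive roots of the root system `F₄`:
`{εᵢ} ∪ {εᵢ−εⱼ, εᵢ+εⱼ : i<j} ∪ {(ε₁±ε₂±ε₃±ε₄)/2}`. -/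
noncomputable def F4pos : Set (EuclideanSpace ℝ (Fin 4)) :=
  {v | (∃ i, v = eps i) ∨
       (∃ i j : Fin 4, i < j ∧ (v = eps i - eps j ∨ v = eps i + eps j)) ∨
       (∃ s : Fin 4 → ℝ, s 0 = 1 ∧ (∀ k, s k = 1 ∨ s k = -1) ∧
          v = (1/2 : ℝ) • ∑ k, s k • eps k)}

/-- The simple roots `α₁ = ε₂−ε₃`, `α₂ = ε₃−ε₄`, `α₃ = ε₄`, `α₄ = (ε₁−ε₂−ε₃−ε₄)/2` of `F₄`. -/
noncomputable def sroot : Fin 4 → EuclideanSpace ℝ (Fin 4) :=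
  ![eps 1 - eps 2, eps 2 - eps 3, eps 3, (1/2 : ℝ) • (eps 0 - eps 1 - eps 2 - eps 3)]

/-- The exponential of a (nilpotent) endomorphism, as a finite sum. -/
noncomputable def expNil {M : Type*} [AddCommGroup M] [Module ℂ M] (A : Module.End ℂ M) :
    Module.End ℂ M :=
  ∑ k ∈ Finset.range (nilpotencyClass A), (k.factorial : ℂ)⁻¹ • A ^ k

/-- The coadjoint orbit of a linear form `f ∈ 𝔫*`: all `f ∘ exp(−ad x)`, `x ∈ 𝔫`. -/
noncomputable def orbitOf {n : Type*} [LieRing n] [LieAlgebra ℂ n] (f : Module.Dual ℂ n) :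
    Set (Module.Dual ℂ n) :=
  {lam | ∃ x : n, lam = f.comp (expNil (-(LieAlgebra.ad ℂ n x)))}

/-- `x ≤ y` iff `y − x` is a (possibly empty) sum of positive roots of `F₄`. -/
def rootLE (x y : EuclideanSpace ℝ (Fin 4)) : Prop :=
  ∃ M : Multiset (EuclideanSpace ℝ (Fin 4)), (∀ g ∈ M, g ∈ F4pos) ∧ y - x = M.sum

/-- `x < y` iff `x ≤ y` and `x ≠ y`. -/
def rootLT (x y : EuclideanSpace ℝ (Fin 4)) : Prop := rootLE x y ∧ x ≠ y

local notation "ℝ⁴" => EuclideanSpace ℝ (Fin 4)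

-- Positive on `F₄⁺`; it makes `rootLE` antisymmetric.
noncomputable def positiveForm : ℝ⁴ →ₗ[ℝ] ℝ where
  toFun v := 8 * v 0 + 4 * v 1 + 2 * v 2 + v 3
  map_add' a b := by simp only [PiLp.add_apply]; ring
  map_smul' c a := by simp only [PiLp.smul_apply, smul_eq_mul, RingHom.id_apply]; ring

lemma positiveForm_eps (i : Fin 4) : positiveForm (eps i) = ![8, 4, 2, 1] i := by
  fin_cases i <;> simp [positiveForm, eps]

lemma positiveForm_pos {v : ℝ⁴} (hv : v ∈ F4pos) : 0 < positiveForm v := by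
  rcases hv with ⟨i, rfl⟩ | ⟨i, j, hij, rfl | rfl⟩ | ⟨s, hs0, hs, rfl⟩
  · rw [positiveForm_eps]; fin_cases i <;> norm_num
  all_goals simp only [map_sub, map_add, map_smul, map_sum, positiveForm_eps, smul_eq_mul]
  · revert hij; fin_cases i <;> fin_cases j <;> norm_num
  · revert hij; fin_cases i <;> fin_cases j <;> norm_num
  · rw [Fin.sum_univ_four, hs0]
    rcases hs 1 with h1 | h1 <;> rcases hs 2 with h2 | h2 <;> rcases hs 3 with h3 | h3 <;>
      simp [h1, h2, h3] <;> norm_num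

lemma positiveForm_sum_nonneg {P : Multiset ℝ⁴} (hP : ∀ g ∈ P, g ∈ F4pos) :
    0 ≤ positiveForm P.sum := by
  rw [map_multiset_sum]
  exact Multiset.sum_nonneg fun y hy => by
    obtain ⟨g, hg, rfl⟩ := Multiset.mem_map.1 hy
    exact (positiveForm_pos (hP g hg)).le

lemma positiveForm_sum_pos {P : Multiset ℝ⁴} (hP : ∀ g ∈ P, g ∈ F4pos) (hne : P ≠ 0) :
    0 < positiveForm P.sum := by
  obtain ⟨b, hb⟩ := Multiset.exists_mem_of_ne_zero hne
  rw [← Multiset.sum_erase hb, map_add]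
  have := positiveForm_sum_nonneg (P := P.erase b) fun g hg => hP g (Multiset.mem_of_mem_erase hg)
  linarith [positiveForm_pos (hP b hb)]

lemma positiveForm_le_of_rootLE {a b : ℝ⁴} (h : rootLE a b) : positiveForm a ≤ positiveForm b := by
  obtain ⟨M, hM, hsum⟩ := h
  have := positiveForm_sum_nonneg hM
  rw [← hsum, map_sub] at this
  linarith

lemma rootLE_refl (a : ℝ⁴) : rootLE a a := ⟨0, by simp, by simp⟩

lemma rootLE.trans {a b c : ℝ⁴} (hab : rootLE a b) (hbc : rootLE b c) : rootLE a c := by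
  obtain ⟨M₁, hM₁, hs₁⟩ := hab
  obtain ⟨M₂, hM₂, hs₂⟩ := hbc
  refine ⟨M₁ + M₂, fun g hg => (Multiset.mem_add.1 hg).elim (hM₁ g) (hM₂ g), ?_⟩
  rw [Multiset.sum_add, ← hs₁, ← hs₂]
  abel

lemma rootLE_add_sum (v : ℝ⁴) {P : Multiset ℝ⁴} (hP : ∀ g ∈ P, g ∈ F4pos) :
    rootLE v (v + P.sum) :=
  ⟨P, hP, add_sub_cancel_left v P.sum⟩

lemma rootLT_add_sum (v : ℝ⁴) {P : Multiset ℝ⁴} (hP : ∀ g ∈ P, g ∈ F4pos) (hne : P ≠ 0) :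
    rootLT v (v + P.sum) := by
  refine ⟨rootLE_add_sum v hP, fun h => ?_⟩
  have := positiveForm_sum_pos hP hne
  rw [left_eq_add.1 h, map_zero] at this
  exact lt_irrefl _ this

lemma rootLT_of_rootLE_of_add_rootLE {β w η τ : ℝ⁴} (hβw : rootLE β w) (hη : η ∈ F4pos)
    (h : rootLE (η + w) τ) : rootLT β τ := by
  refine ⟨hβw.trans ((rootLE_add_sum w (P := {η}) (by simpa using hη)).trans ?_), fun hβτ => ?_⟩
  · simpa [add_comm] using h
  · have := positiveForm_le_of_rootLE hβw
    have := positiveForm_le_of_rootLE h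
    have := positiveForm_pos hη
    rw [map_add, ← hβτ] at *
    linarith

def IsUniqueRootSum (v : ℝ⁴) (S : Multiset ℝ⁴) : Prop :=
  ∀ M : Multiset ℝ⁴, (∀ g ∈ M, g ∈ F4pos) → M.sum = v → M = S

section UniqueSum

variable {β β₀ : ℝ⁴} {S : Multiset ℝ⁴} {D : Finset F4pos}

lemma le_of_rootLE_add_sum (huniq : IsUniqueRootSum (β₀ - β) S)
    {P : Multiset ℝ⁴} (hP : ∀ g ∈ P, g ∈ F4pos) (h : rootLE (β + P.sum) β₀) : P ≤ S := by
  obtain ⟨M, hM, hsum⟩ := h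
  have hPM : P + M = S :=
    huniq _ (fun g hg => (Multiset.mem_add.1 hg).elim (hP g) (hM g))
      (by rw [Multiset.sum_add, ← hsum]; abel)
  exact hPM ▸ Multiset.le_add_right P M

lemma mem_of_add_rootLE (habove : ∀ τ ∈ D, rootLT β (τ : ℝ⁴) → (τ : ℝ⁴) = β₀)
    (huniq : IsUniqueRootSum (β₀ - β) S)
    {η : ℝ⁴} (hη : η ∈ F4pos) {τ : F4pos} (hτ : τ ∈ D) (h : rootLE (η + β) τ) : η ∈ S := by
  rw [habove τ hτ (rootLT_of_rootLE_of_add_rootLE (rootLE_refl β) hη h)] at h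
  exact Multiset.singleton_le.1 <|
    le_of_rootLE_add_sum huniq (by simpa using hη) (by simpa [add_comm] using h)

lemma eq_of_add_rootLE (habove : ∀ τ ∈ D, rootLT β (τ : ℝ⁴) → (τ : ℝ⁴) = β₀)
    (huniq : IsUniqueRootSum (β₀ - β) S)
    (hS : ∀ g ∈ S, g ∈ F4pos) {a η : ℝ⁴} (ha : a ∈ S) (hη : η ∈ F4pos) {τ : F4pos}
    (hτ : τ ∈ D) (h : rootLE (η + (β + (S.erase a).sum)) τ) : η = a := by
  have hT : ∀ g ∈ S.erase a, g ∈ F4pos := fun g hg => hS g (Multiset.mem_of_mem_erase hg)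
  rw [habove τ hτ (rootLT_of_rootLE_of_add_rootLE (rootLE_add_sum β hT) hη h)] at h
  have hle : {η} + S.erase a ≤ {a} + S.erase a := by
    rw [Multiset.singleton_add, Multiset.singleton_add, Multiset.cons_erase ha]
    refine le_of_rootLE_add_sum huniq (Multiset.forall_mem_cons.2 ⟨hη, hT⟩) ?_
    simpa [add_left_comm] using h
  simpa using (add_le_add_iff_right _).1 hle

lemma add_add_sum_erase (hsum : β₀ - β = S.sum) {a : ℝ⁴} (ha : a ∈ S) :
    a + (β + (S.erase a).sum) = β₀ := by
  rw [add_left_comm, Multiset.sum_erase ha, ← hsum]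
  abel

lemma add_sum_erase_notMem (habove : ∀ τ ∈ D, rootLT β (τ : ℝ⁴) → (τ : ℝ⁴) = β₀)
    (hS : ∀ g ∈ S, g ∈ F4pos) (hsum : β₀ - β = S.sum) (hns : β₀ - β ∉ F4pos) {a : ℝ⁴}
    (ha : a ∈ S) (hv : β + (S.erase a).sum ∈ F4pos) : (⟨_, hv⟩ : F4pos) ∉ D := by
  intro hD
  have hT : ∀ g ∈ S.erase a, g ∈ F4pos := fun g hg => hS g (Multiset.mem_of_mem_erase hg)
  have hT0 : S.erase a ≠ 0 := fun h0 => hns <| by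
    rw [hsum, ← Multiset.cons_erase ha, h0]
    simpa using hS a ha
  have hβ₀ : β + (S.erase a).sum = β₀ := habove _ hD (rootLT_add_sum β hT hT0)
  have ha0 : a = 0 := add_eq_right.1 ((add_add_sum_erase hsum ha).trans hβ₀.symm)
  simpa [ha0] using positiveForm_pos (hS a ha)

end UniqueSum

lemma sum_erase_map_univ_val {ι G : Type*} [Fintype ι] [DecidableEq ι] [AddCommGroup G]
    [DecidableEq G] (f : ι → G) (j : ι) :
    ((Finset.univ.val.map f).erase (f j)).sum = ∑ i ∈ Finset.univ.erase j, f i := by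
  rw [eq_sub_of_add_eq' (Multiset.sum_erase (Multiset.mem_map_of_mem f (Finset.mem_univ_val j)))]
  exact (Finset.sum_erase_eq_sub (Finset.mem_univ j)).symm

def notBelow (D : Finset F4pos) : Set F4pos := {w | ∀ τ ∈ D, ¬ rootLE w τ}

lemma notMem_of_mem_notBelow {D : Finset F4pos} {w : F4pos} (hw : w ∈ notBelow D) : w ∉ D :=
  fun hD => hw w hD (rootLE_refl _)

lemma mem_notBelow_of_add {D : Finset F4pos} {w η ρ : F4pos} (hw : ∀ τ ∈ D, ¬ rootLT w τ)
    (hρ : (ρ : ℝ⁴) = η + w) : ρ ∈ notBelow D :=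
  fun τ hτ hle => hw τ hτ (rootLT_of_rootLE_of_add_rootLE (rootLE_refl _) η.2 (hρ ▸ hle))

section Exponential

variable {M : Type*} [AddCommGroup M] [Module ℂ M]

lemma expNil_zero : expNil (0 : Module.End ℂ M) = 1 := by
  cases subsingleton_or_nontrivial M
  · exact Subsingleton.elim _ _
  · simp [expNil]

lemma expNil_apply_eq_sum {A : Module.End ℂ M} (hA : IsNilpotent A) {m : ℕ}
    (hm : nilpotencyClass A ≤ m) (v : M) :
    expNil A v = ∑ k ∈ Finset.range m, (k.factorial : ℂ)⁻¹ • (A ^ k) v := by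
  simp only [expNil, LinearMap.sum_apply, LinearMap.smul_apply]
  refine Finset.sum_subset (Finset.range_subset_range.2 hm) fun k _ hk => ?_
  rw [pow_eq_zero_of_le (by simpa using hk) (pow_nilpotencyClass hA), LinearMap.zero_apply,
    smul_zero]

lemma apply_expNil_eq_add_smul {A : Module.End ℂ M} (hA : IsNilpotent A) {f : Module.Dual ℂ M}
    {W : Submodule ℂ M} (hWf : W ≤ LinearMap.ker f) (hAW : ∀ w ∈ W, A w ∈ W) {u v : M} {c : ℂ}
    (hu : A u ∈ W) (hv : A v - c • u ∈ W) : f (expNil A v) = f v + c * f u := by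
  have hAAv : A (A v) ∈ W := by simpa using W.add_mem (hAW _ hv) (W.smul_mem c hu)
  have hpow : ∀ k, f ((A ^ (k + 1 + 1)) v) = 0 := fun k => hWf <| by
    rw [pow_succ, pow_succ, Module.End.mul_apply, Module.End.mul_apply]
    exact Module.End.pow_apply_mem_of_forall_mem k hAW _ hAAv
  have hAv : f (A v) = c * f u := by
    have := hWf hv
    rw [LinearMap.mem_ker, map_sub, map_smul, smul_eq_mul, sub_eq_zero] at this
    exact this
  rw [expNil_apply_eq_sum hA (Nat.le_add_right _ 2), map_sum, Finset.sum_range_succ',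
    Finset.sum_range_succ']
  simp only [map_smul, hpow, smul_zero, Finset.sum_const_zero, zero_add, pow_one, pow_zero,
    Module.End.one_apply, hAv]
  simp [add_comm]

end Exponential

section Orbit

variable {L : Type*} [LieRing L] [LieAlgebra ℂ L]

lemma exists_eq_comp_expNil_of_orbitOf_eq {f g : Module.Dual ℂ L} (h : orbitOf f = orbitOf g) :
    ∃ x : L, g = f.comp (expNil (-LieAlgebra.ad ℂ L x)) := by
  have hg : g ∈ orbitOf g := ⟨0, by simp [expNil_zero, Module.End.one_eq_id]⟩
  rwa [← h] at hg

lemma apply_expNil_neg_ad_eq_sub_smul {x : L} (hx : IsNilpotent (LieAlgebra.ad ℂ L x))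
    {f : Module.Dual ℂ L} {W : Submodule ℂ L} (hWf : W ≤ LinearMap.ker f)
    (hW : ∀ w ∈ W, ⁅x, w⁆ ∈ W) {u v : L} {c : ℂ} (hu : ⁅x, u⁆ ∈ W) (hv : ⁅x, v⁆ - c • u ∈ W) :
    f (expNil (-LieAlgebra.ad ℂ L x) v) = f v - c * f u := by
  have := apply_expNil_eq_add_smul hx.neg hWf (fun w hw => by simpa using W.neg_mem (hW w hw))
    (u := u) (v := v) (c := -c) (by simpa using W.neg_mem hu)
    (by simpa [sub_eq_add_neg, add_comm] using W.neg_mem hv)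
  rw [this, neg_mul, ← sub_eq_add_neg]

lemma apply_expNil_neg_ad_eq_of_lie_mem {x : L} (hx : IsNilpotent (LieAlgebra.ad ℂ L x))
    {f : Module.Dual ℂ L} {W : Submodule ℂ L} (hWf : W ≤ LinearMap.ker f)
    (hW : ∀ w ∈ W, ⁅x, w⁆ ∈ W) {v : L} (hv : ⁅x, v⁆ ∈ W) :
    f (expNil (-LieAlgebra.ad ℂ L x) v) = f v := by
  simpa using apply_expNil_neg_ad_eq_sub_smul hx hWf hW (u := 0) (c := 0) (by simp)
    (by simpa using hv)

end Orbit

section Coord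

variable {ι K M : Type*} [CommRing K] [AddCommGroup M] [Module K M] {e : Module.Basis ι K M}
  {D : Finset ι}

lemma sum_smul_coord_apply_basis_of_mem (ξ : ι → K) {w : ι} (hw : w ∈ D) :
    (∑ γ ∈ D, ξ γ • e.coord γ) (e w) = ξ w := by
  classical
  simp [Finsupp.single_apply, hw]

lemma sum_smul_coord_apply_basis_of_notMem (ξ : ι → K) {w : ι} (hw : w ∉ D) :
    (∑ γ ∈ D, ξ γ • e.coord γ) (e w) = 0 := by
  classical
  simp [Finsupp.single_apply, hw]

lemma span_image_le_ker_sum_smul_coord (ξ : ι → K) {P : Set ι} (hP : ∀ w ∈ P, w ∉ D) :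
    Submodule.span K (e '' P) ≤ LinearMap.ker (∑ γ ∈ D, ξ γ • e.coord γ) :=
  Submodule.span_le.2 <| Set.image_subset_iff.2 fun w hw =>
    sum_smul_coord_apply_basis_of_notMem ξ (hP w hw)

end Coord

section Graded

variable {K V L : Type*} [CommRing K] [AddCommGroup V] {Φ : Set V} [LieRing L] [LieAlgebra K L]
  {e : Module.Basis Φ K L}

def IsGradedBasis (e : Module.Basis Φ K L) : Prop :=
  ∀ γ δ : Φ, ⁅e γ, e δ⁆ ∈ Submodule.span K (e '' {ρ | (ρ : V) = γ + δ})

lemma isGradedBasis_of_lie_eq {N : Φ → Φ → K}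
    (hbr : ∀ γ δ : Φ, ∀ h : (γ : V) + δ ∈ Φ, ⁅e γ, e δ⁆ = N γ δ • e ⟨(γ : V) + δ, h⟩)
    (hbr0 : ∀ γ δ : Φ, (γ : V) + δ ∉ Φ → ⁅e γ, e δ⁆ = 0) : IsGradedBasis e := by
  intro γ δ
  by_cases h : (γ : V) + δ ∈ Φ
  · rw [hbr γ δ h]
    exact Submodule.smul_mem _ _ (Submodule.subset_span ⟨_, rfl, rfl⟩)
  · rw [hbr0 γ δ h]
    exact Submodule.zero_mem _

lemma lie_basis_mem_span (hgr : IsGradedBasis e) {x : L} {w : Φ} {P : Set Φ}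
    (h : ∀ η ρ : Φ, e.repr x η ≠ 0 → (ρ : V) = η + w → ρ ∈ P) :
    ⁅x, e w⁆ ∈ Submodule.span K (e '' P) := by
  rw [← e.linearCombination_repr x, Finsupp.linearCombination_apply, Finsupp.sum, sum_lie]
  refine Submodule.sum_mem _ fun η hη => ?_
  rw [smul_lie]
  exact Submodule.smul_mem _ _ <| Submodule.span_mono
    (Set.image_mono fun ρ hρ => h η ρ (Finsupp.mem_support_iff.1 hη) hρ) (hgr η w)

lemma lie_sub_smul_lie_basis_mem_span (hgr : IsGradedBasis e) {x : L} {a w : Φ} {P : Set Φ}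
    (h : ∀ η ρ : Φ, η ≠ a → e.repr x η ≠ 0 → (ρ : V) = η + w → ρ ∈ P) :
    ⁅x, e w⁆ - e.repr x a • ⁅e a, e w⁆ ∈ Submodule.span K (e '' P) := by
  rw [← smul_lie, ← sub_lie]
  refine lie_basis_mem_span hgr fun η ρ hη hρ => ?_
  by_cases hηa : η = a
  · simp [hηa] at hη
  · exact h η ρ hηa (by simpa [Finsupp.single_apply, Ne.symm hηa] using hη) hρ

lemma lie_mem_span_of_add_mem (hgr : IsGradedBasis e) (x : L) {P : Set Φ}
    (hP : ∀ w η ρ : Φ, w ∈ P → (ρ : V) = η + w → ρ ∈ P) {v : L}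
    (hv : v ∈ Submodule.span K (e '' P)) : ⁅x, v⁆ ∈ Submodule.span K (e '' P) := by
  induction hv using Submodule.span_induction with
  | mem _ h =>
    obtain ⟨w, hw, rfl⟩ := h
    exact lie_basis_mem_span hgr fun η ρ _ hρ => hP w η ρ hw hρ
  | zero => simp
  | add _ _ _ _ h₁ h₂ => rw [lie_add]; exact add_mem h₁ h₂
  | smul c _ _ h => rw [lie_smul]; exact Submodule.smul_mem _ c h

end Graded

lemma repr_eq_zero_of_comp_expNil {V L : Type*} [AddCommGroup V] {Φ : Set V} [LieRing L]
    [LieAlgebra ℂ L] {e : Module.Basis Φ ℂ L} {N : Φ → Φ → ℂ}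
    (hbr : ∀ γ δ : Φ, ∀ h : (γ : V) + δ ∈ Φ, ⁅e γ, e δ⁆ = N γ δ • e ⟨(γ : V) + δ, h⟩)
    (hgr : IsGradedBasis e) {x : L} (hx : IsNilpotent (LieAlgebra.ad ℂ L x))
    {f g : Module.Dual ℂ L} (hfg : g = f.comp (expNil (-LieAlgebra.ad ℂ L x)))
    {P : Set Φ} (hPf : Submodule.span ℂ (e '' P) ≤ LinearMap.ker f)
    (hP : ∀ v ∈ Submodule.span ℂ (e '' P), ⁅x, v⁆ ∈ Submodule.span ℂ (e '' P))
    {a w t : Φ} (hawt : (a : V) + w = t) (hN : N a w ≠ 0)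
    (ht : ⁅x, e t⁆ ∈ Submodule.span ℂ (e '' P)) (hft : f (e t) ≠ 0)
    (hfw : f (e w) = 0) (hgw : g (e w) = 0)
    (hrest : ∀ η ρ : Φ, η ≠ a → e.repr x η ≠ 0 → (ρ : V) = η + w → ρ ∈ P) :
    e.repr x a = 0 := by
  have hv : ⁅x, e w⁆ - (e.repr x a * N a w) • e t ∈ Submodule.span ℂ (e '' P) := by
    have := lie_sub_smul_lie_basis_mem_span hgr hrest
    rwa [hbr a w (hawt ▸ t.2), smul_smul, show (⟨(a : V) + w, _⟩ : Φ) = t from Subtype.ext hawt]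
      at this
  have h := apply_expNil_neg_ad_eq_sub_smul hx hPf hP ht hv
  rw [← LinearMap.comp_apply, ← hfg, hgw, hfw, zero_sub, zero_eq_neg] at h
  simpa [hN, hft] using h

theorem stmt15_general {n : Type*} [LieRing n] [LieAlgebra ℂ n]
    -- `𝔫` has basis `(e_γ)` indexed by the positive roots of `F₄`
    (e : Module.Basis F4pos ℂ n)
    (N : F4pos → F4pos → ℂ)
    (hbr : ∀ γ δ : F4pos, ∀ h : (γ : EuclideanSpace ℝ (Fin 4)) + δ ∈ F4pos,
      ⁅e γ, e δ⁆ = N γ δ • e ⟨(γ : EuclideanSpace ℝ (Fin 4)) + δ, h⟩)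
    (hN : ∀ γ δ : F4pos, (γ : EuclideanSpace ℝ (Fin 4)) + (δ : EuclideanSpace ℝ (Fin 4)) ∈ F4pos →
      N γ δ ≠ 0)
    (hbr0 : ∀ γ δ : F4pos,
      (γ : EuclideanSpace ℝ (Fin 4)) + (δ : EuclideanSpace ℝ (Fin 4)) ∉ F4pos → ⁅e γ, e δ⁆ = 0)
    (hnil : ∀ x : n, IsNilpotent (LieAlgebra.ad ℂ n x))
    (D : Finset F4pos)
    -- `D` is a rook placement, orthogonal and non-singular
    (hns : ∀ γ ∈ D, ∀ δ ∈ D, (γ : EuclideanSpace ℝ (Fin 4)) ≠ δ →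
      (γ : EuclideanSpace ℝ (Fin 4)) - (δ : EuclideanSpace ℝ (Fin 4)) ∉ F4pos)
    -- `β₀` is the unique maximal element of `D`
    (β₀ : F4pos) (hβ₀D : β₀ ∈ D)
    (hmax : ∀ γ ∈ D, ¬ rootLT (β₀ : EuclideanSpace ℝ (Fin 4)) (γ : EuclideanSpace ℝ (Fin 4)))
    -- `β ∈ D ∖ {β₀}` with `γ ≯ β` for all `γ ∈ D ∖ {β₀}`
    (β : F4pos) (hβD : β ∈ D) (hββ₀ : β ≠ β₀)
    (hsubmax : ∀ γ ∈ D, γ ≠ β₀ →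
      ¬ rootLT (β : EuclideanSpace ℝ (Fin 4)) (γ : EuclideanSpace ℝ (Fin 4)))
    -- `β₀ − β = γ₁ + ⋯ + γ_k` is the unique expression of `β₀ − β`
    -- as a sum of positive roots (as a multiset)
    (k : ℕ) (γs : Fin k → EuclideanSpace ℝ (Fin 4)) (hγs : ∀ j, γs j ∈ F4pos)
    (hsum : (β₀ : EuclideanSpace ℝ (Fin 4)) - (β : EuclideanSpace ℝ (Fin 4)) = ∑ j, γs j)
    (huniq : ∀ M : Multiset (EuclideanSpace ℝ (Fin 4)), (∀ g ∈ M, g ∈ F4pos) →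
      M.sum = (β₀ : EuclideanSpace ℝ (Fin 4)) - (β : EuclideanSpace ℝ (Fin 4)) →
      M = Multiset.map γs Finset.univ.val)
    -- `β + Σ_{j∈J} γⱼ ∈ F₄⁺` for every `J ⊆ {1,…,k}`
    (hJ : ∀ J : Finset (Fin k), (β : EuclideanSpace ℝ (Fin 4)) + ∑ j ∈ J, γs j ∈ F4pos)
    (ξ₁ ξ₂ : F4pos → ℂ)
    (hξ₁ : ∀ γ ∈ D, ξ₁ γ ≠ 0)
    (hξβ : ξ₁ β ≠ ξ₂ β) :
    orbitOf (∑ γ ∈ D, ξ₁ γ • e.coord γ) ≠ orbitOf (∑ γ ∈ D, ξ₂ γ • e.coord γ) := by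
  intro horb
  obtain ⟨x, hx⟩ := exists_eq_comp_expNil_of_orbitOf_eq horb
  have hgr : IsGradedBasis e := isGradedBasis_of_lie_eq hbr hbr0
  have hPf := span_image_le_ker_sum_smul_coord (e := e) ξ₁ fun w => notMem_of_mem_notBelow (D := D)
  have hP : ∀ v ∈ Submodule.span ℂ (e '' notBelow D),
      ⁅x, v⁆ ∈ Submodule.span ℂ (e '' notBelow D) := fun v =>
    lie_mem_span_of_add_mem hgr x fun w η ρ hw => mem_notBelow_of_add fun τ hτ hlt => hw τ hτ hlt.1
  have hβ₀ : ⁅x, e β₀⁆ ∈ Submodule.span ℂ (e '' notBelow D) :=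
    lie_basis_mem_span hgr fun η ρ _ => mem_notBelow_of_add hmax
  have habove : ∀ τ ∈ D, rootLT β (τ : ℝ⁴) → (τ : ℝ⁴) = β₀ :=
    fun τ hτ hlt => congrArg Subtype.val (by_contra fun hne => hsubmax τ hτ hne hlt)
  set S := Multiset.map γs Finset.univ.val
  have hS : ∀ g ∈ S, g ∈ F4pos := by simpa [S] using hγs
  have hsumS : (β₀ : ℝ⁴) - β = S.sum := hsum
  have hβ₀β : (β₀ : ℝ⁴) - β ∉ F4pos := hns β₀ hβ₀D β hβD fun h => hββ₀ (Subtype.ext h).symm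
  have hcoef : ∀ j, e.repr x ⟨γs j, hγs j⟩ = 0 := by
    intro j
    have ha : γs j ∈ S := Multiset.mem_map_of_mem _ (Finset.mem_univ_val j)
    have hv : (β : ℝ⁴) + (S.erase (γs j)).sum ∈ F4pos := sum_erase_map_univ_val γs j ▸ hJ _
    have hav := add_add_sum_erase hsumS ha
    have hvD := add_sum_erase_notMem habove hS hsumS hβ₀β ha hv
    refine repr_eq_zero_of_comp_expNil hbr hgr (hnil x) hx hPf hP (w := ⟨_, hv⟩) hav
      (hN _ _ (hav ▸ β₀.2)) hβ₀ ?_ (sum_smul_coord_apply_basis_of_notMem _ hvD)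
      (sum_smul_coord_apply_basis_of_notMem _ hvD)
      fun η ρ hηa _ hρ τ hτ hle =>
        hηa (Subtype.ext (eq_of_add_rootLE habove huniq hS ha η.2 hτ (hρ ▸ hle)))
    rw [sum_smul_coord_apply_basis_of_mem _ hβ₀D]
    exact hξ₁ β₀ hβ₀D
  have hβ : ⁅x, e β⁆ ∈ Submodule.span ℂ (e '' notBelow D) :=
    lie_basis_mem_span hgr fun η ρ hη hρ τ hτ hle => by
      obtain ⟨j, -, hj⟩ := Multiset.mem_map.1 (mem_of_add_rootLE habove huniq η.2 hτ (hρ ▸ hle))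
      exact hη ((Subtype.ext hj : (⟨γs j, hγs j⟩ : F4pos) = η) ▸ hcoef j)
  have h := apply_expNil_neg_ad_eq_of_lie_mem (hnil x) hPf hP hβ
  rw [← LinearMap.comp_apply, ← hx, sum_smul_coord_apply_basis_of_mem _ hβD,
    sum_smul_coord_apply_basis_of_mem _ hβD] at h
  exact hξβ h.symm

theorem stmt15 {n : Type*} [LieRing n] [LieAlgebra ℂ n]
    -- `𝔫` has basis `(e_γ)` indexed by the positive roots of `F₄`
    (e : Module.Basis F4pos ℂ n)
    (N : F4pos → F4pos → ℂ)
    (hbr : ∀ γ δ : F4pos, ∀ h : (γ : EuclideanSpace ℝ (Fin 4)) + δ ∈ F4pos,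
      ⁅e γ, e δ⁆ = N γ δ • e ⟨(γ : EuclideanSpace ℝ (Fin 4)) + δ, h⟩)
    (hN : ∀ γ δ : F4pos, (γ : EuclideanSpace ℝ (Fin 4)) + (δ : EuclideanSpace ℝ (Fin 4)) ∈ F4pos →
      N γ δ ≠ 0)
    (hbr0 : ∀ γ δ : F4pos,
      (γ : EuclideanSpace ℝ (Fin 4)) + (δ : EuclideanSpace ℝ (Fin 4)) ∉ F4pos → ⁅e γ, e δ⁆ = 0)
    (hnil : ∀ x : n, IsNilpotent (LieAlgebra.ad ℂ n x))
    (D : Finset F4pos)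
    -- `D` is a rook placement, orthogonal and non-singular
    (hrook : ∀ γ ∈ D, ∀ δ ∈ D, (γ : EuclideanSpace ℝ (Fin 4)) ≠ δ →
      ⟪(γ : EuclideanSpace ℝ (Fin 4)), (δ : EuclideanSpace ℝ (Fin 4))⟫ ≤ 0)
    (horth : ∀ γ ∈ D, ∀ δ ∈ D, (γ : EuclideanSpace ℝ (Fin 4)) ≠ δ →
      ⟪(γ : EuclideanSpace ℝ (Fin 4)), (δ : EuclideanSpace ℝ (Fin 4))⟫ = 0)
    (hns : ∀ γ ∈ D, ∀ δ ∈ D, (γ : EuclideanSpace ℝ (Fin 4)) ≠ δ →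
      (γ : EuclideanSpace ℝ (Fin 4)) - (δ : EuclideanSpace ℝ (Fin 4)) ∉ F4pos)
    -- `β₀` is the unique maximal element of `D`
    (β₀ : F4pos) (hβ₀D : β₀ ∈ D)
    (hmax : ∀ γ ∈ D, ¬ rootLT (β₀ : EuclideanSpace ℝ (Fin 4)) (γ : EuclideanSpace ℝ (Fin 4)))
    (huniqmax : ∀ γ ∈ D, γ ≠ β₀ → ∃ δ ∈ D,
      rootLT (γ : EuclideanSpace ℝ (Fin 4)) (δ : EuclideanSpace ℝ (Fin 4)))
    -- `β ∈ D ∖ {β₀}` with `γ ≯ β` for all `γ ∈ D ∖ {β₀}`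
    (β : F4pos) (hβD : β ∈ D) (hββ₀ : β ≠ β₀)
    (hsubmax : ∀ γ ∈ D, γ ≠ β₀ →
      ¬ rootLT (β : EuclideanSpace ℝ (Fin 4)) (γ : EuclideanSpace ℝ (Fin 4)))
    -- `β₀ − β = γ₁ + ⋯ + γ_k` is the unique expression of `β₀ − β`
    -- as a sum of positive roots (as a multiset)
    (k : ℕ) (γs : Fin k → EuclideanSpace ℝ (Fin 4)) (hγs : ∀ j, γs j ∈ F4pos)
    (hsum : (β₀ : EuclideanSpace ℝ (Fin 4)) - (β : EuclideanSpace ℝ (Fin 4)) = ∑ j, γs j)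
    (huniq : ∀ M : Multiset (EuclideanSpace ℝ (Fin 4)), (∀ g ∈ M, g ∈ F4pos) →
      M.sum = (β₀ : EuclideanSpace ℝ (Fin 4)) - (β : EuclideanSpace ℝ (Fin 4)) →
      M = Multiset.map γs Finset.univ.val)
    -- `β + Σ_{j∈J} γⱼ ∈ F₄⁺` for every `J ⊆ {1,…,k}`
    (hJ : ∀ J : Finset (Fin k), (β : EuclideanSpace ℝ (Fin 4)) + ∑ j ∈ J, γs j ∈ F4pos)
    (ξ₁ ξ₂ : F4pos → ℂ)
    (hξ₁ : ∀ γ ∈ D, ξ₁ γ ≠ 0) (hξ₂ : ∀ γ ∈ D, ξ₂ γ ≠ 0)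
    (hξβ : ξ₁ β ≠ ξ₂ β) :
    orbitOf (∑ γ ∈ D, ξ₁ γ • e.coord γ) ≠ orbitOf (∑ γ ∈ D, ξ₂ γ • e.coord γ) :=
  stmt15_general e N hbr hN hbr0 hnil D hns β₀ hβ₀D hmax β hβD hββ₀ hsubmax k γs hγs hsum huniq hJ
    ξ₁ ξ₂ hξ₁ hξβ
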